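/- arXiv:2312.05299 — 2 statements merged into one kernel-verified Lean document; each statement's English description precedes it below -/
import Mathlib

section
/- Let α be a finite type with decidable equality and let σ ∈ Equiv.Perm α. If σ is even (Equiv.Perm.sign σ = 1) and σ moves exactly 4 points ((σ.support).card = 4), then σ is an involution: σ * σ = 1. -/
theorem even_support_four_involution {α : Type*} [Fintype α] [DecidableEq α]
    (σ : Equiv.Perm α) (hsign : Equiv.Perm.sign σ = 1)
    (hsupp : σ.support.card = 4) : σ * σ = 1 := by
  have hsum : σ.cycleType.sum = 4 := by
    rw [Equiv.Perm.sum_cycleType, hsupp]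
  have h2 : ∀ a ∈ σ.cycleType, 2 ≤ a := fun a ha =>
    Equiv.Perm.two_le_of_mem_cycleType ha
  have hle : 2 * Multiset.card σ.cycleType ≤ σ.cycleType.sum := by
    calc 2 * Multiset.card σ.cycleType = (Multiset.replicate (Multiset.card σ.cycleType) 2).sum := by
          simp [Multiset.sum_replicate, mul_comm]
      _ ≤ σ.cycleType.sum := Multiset.sum_le_sum_of_rel_le (by
          apply Multiset.rel_replicate_left.2
          exact ⟨rfl, fun a ha => h2 a ha⟩)
  have hsign' := Equiv.Perm.sign_of_cycleType σ
  rw [hsign, hsum] at hsign'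
  have hne : σ.cycleType ≠ 0 := by
    intro h
    rw [h] at hsum
    simp at hsum
  have hcard1 : 1 ≤ Multiset.card σ.cycleType := by
    rwa [Nat.one_le_iff_ne_zero, ne_eq, Multiset.card_eq_zero]
  have hcardle : Multiset.card σ.cycleType ≤ 2 := by omega
  have hcard : Multiset.card σ.cycleType = 2 := by
    interval_cases h : Multiset.card σ.cycleType
    · exact absurd hsign' (by decide)
    · rfl
  obtain ⟨a, b, hab⟩ := Multiset.card_eq_two.mp hcard
  have ha : a ∈ σ.cycleType := by rw [hab]; simp
  have hb : b ∈ σ.cycleType := by rw [hab]; simp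
  have ha2 := h2 a ha
  have hb2 := h2 b hb
  rw [hab] at hsum
  simp [Multiset.sum_cons] at hsum
  have ha' : a = 2 := by omega
  have hb' : b = 2 := by omega
  have horder : orderOf σ = 2 := by
    rw [← Equiv.Perm.lcm_cycleType, hab, ha', hb']
    simp [Multiset.lcm]
    decide
  have := pow_orderOf_eq_one σ
  rw [horder, sq] at this
  exact this
end

section
/- Let α be a finite type with decidable equality and let σ₁, σ₂ ∈ Equiv.Perm α with σ₁ ≠ σ₂, and suppose each generator moves exactly 4 points: (σ₁.support).card = 4 and (σ₂.support).card = 4. Then the subgroup Subgroup.closure {σ₁, σ₂} of Equiv.Perm α is not a simple group. -/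
/-!
If σ₁ and σ₂ are not both even, the sign character of `K = ⟨σ₁, σ₂⟩` is nontrivial, so a simple
`K` would embed into `ℤˣ`. If both are even, a support of size 4 forces cycle type `(2, 2)`, so
`K` is generated by two involutions and `⟨σ₁ σ₂⟩` is normal in this dihedral group; a simple `K`
would then be cyclic with `(σ₁ σ₂)² = 1`. Either way `K` has at most two elements, yet it contains
`1`, `σ₁` and `σ₂`.
-/

open Equiv Subgroup

namespace Equiv.Perm

variable {α : Type*} [Fintype α] [DecidableEq α]

theorem cycleType_eq_of_card_support_eq_four {σ : Perm α} (hσ : σ.support.card = 4) :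
    σ.cycleType = {4} ∨ σ.cycleType = {2, 2} := by
  have hsum : σ.cycleType.sum = 4 := by rw [sum_cycleType, hσ]
  have htwo : ∀ k ∈ σ.cycleType, 2 ≤ k := fun k hk => two_le_of_mem_cycleType hk
  have hcard : Multiset.card σ.cycleType ≤ 2 := by
    have := Multiset.card_nsmul_le_sum htwo
    rw [smul_eq_mul, hsum] at this
    omega
  interval_cases h : Multiset.card σ.cycleType
  · simp [Multiset.card_eq_zero.mp h] at hsum
  · obtain ⟨k, hk⟩ := Multiset.card_eq_one.mp h
    left
    simp_all
  · obtain ⟨k, l, hkl⟩ := Multiset.card_eq_two.mp h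
    have hk := htwo k (by simp [hkl])
    have hl := htwo l (by simp [hkl])
    simp only [hkl, Multiset.insert_eq_cons, Multiset.sum_cons, Multiset.sum_singleton] at hsum
    right
    rw [hkl, show k = 2 by omega, show l = 2 by omega]

theorem sq_eq_one_of_card_support_eq_four_of_sign_eq_one {σ : Perm α}
    (hσ : σ.support.card = 4) (hsign : sign σ = 1) : σ ^ 2 = 1 := by
  rcases cycleType_eq_of_card_support_eq_four hσ with h | h
  · rw [sign_of_cycleType, h] at hsign
    exact absurd hsign (by decide)
  · rw [← orderOf_dvd_iff_pow_eq_one, ← lcm_cycleType, h]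
    simp

theorem card_le_two_of_not_le_alternatingGroup {H : Subgroup (Perm α)} [IsSimpleGroup H]
    (hH : ¬ H ≤ alternatingGroup α) : Nat.card H ≤ 2 := by
  let f : H →* ℤˣ := sign.comp H.subtype
  have hker : f.ker = ⊥ := f.normal_ker.eq_bot_or_eq_top.resolve_right fun htop =>
    hH fun σ hσ => mem_alternatingGroup.mpr (f.mem_ker.mp (by rw [htop]; exact mem_top ⟨σ, hσ⟩))
  calc Nat.card H ≤ Nat.card ℤˣ := Nat.card_le_card_of_injective f (f.ker_eq_bot_iff.mp hker)
    _ = 2 := by simp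

end Equiv.Perm

namespace Subgroup

variable {G : Type*} [Group G]

theorem mem_normalizer_zpowers_of_conj_eq_inv {g c : G} (h : g * c * g⁻¹ = c⁻¹) :
    g ∈ normalizer (zpowers c : Set G) := by
  rw [mem_normalizer_iff_map_conj_eq, MonoidHom.map_zpowers]
  simp [h]

theorem closure_pair_le_normalizer_zpowers_mul {a b : G} (ha : a ^ 2 = 1) (hb : b ^ 2 = 1) :
    closure {a, b} ≤ normalizer (zpowers (a * b) : Set G) := by
  have ha' : a⁻¹ = a := inv_eq_of_mul_eq_one_right (by rw [← sq, ha])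
  have hb' : b⁻¹ = b := inv_eq_of_mul_eq_one_right (by rw [← sq, hb])
  rw [closure_le, Set.insert_subset_iff, Set.singleton_subset_iff]
  constructor <;> apply mem_normalizer_zpowers_of_conj_eq_inv
  · rw [ha', mul_inv_rev, ha', hb', ← mul_assoc, ← sq, ha, one_mul]
  · rw [hb', mul_inv_rev, ha', hb', mul_assoc, mul_assoc, ← sq, hb, mul_one]

theorem card_closure_pair_le_two_of_sq_eq_one {a b : G} (ha : a ^ 2 = 1) (hb : b ^ 2 = 1)
    (hab : a ≠ b) [IsSimpleGroup (closure {a, b})] : Nat.card (closure {a, b}) ≤ 2 := by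
  set K := closure {a, b}
  have haK : a ∈ K := subset_closure (by simp)
  have hbK : b ∈ K := subset_closure (by simp)
  have hN : ((zpowers (a * b)).subgroupOf K).Normal :=
    (normal_subgroupOf_iff_le_normalizer (zpowers_le.mpr (mul_mem haK hbK))).mpr
      (closure_pair_le_normalizer_zpowers_mul ha hb)
  rcases hN.eq_bot_or_eq_top with hbot | htop
  · have hab1 : a * b = 1 :=
      disjoint_def.mp (subgroupOf_eq_bot.mp hbot) (mem_zpowers _) (mul_mem haK hbK)
    refine absurd ?_ hab
    rw [eq_inv_of_mul_eq_one_left hab1, inv_eq_of_mul_eq_one_right (by rw [← sq, hb])]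
  · rw [subgroupOf_eq_top] at htop
    obtain ⟨m, hm⟩ := mem_zpowers_iff.mp (htop haK)
    obtain ⟨n, hn⟩ := mem_zpowers_iff.mp (htop hbK)
    have hcomm : Commute a b := by
      have := Commute.zpow_zpow_self (a * b) m n
      rwa [hm, hn] at this
    have hsq : (a * b) ^ 2 = 1 := by rw [hcomm.mul_pow, ha, hb, one_mul]
    have : Finite (zpowers (a * b)) :=
      (isOfFinOrder_iff_pow_eq_one.mpr ⟨2, two_pos, hsq⟩).finite_zpowers
    calc Nat.card K ≤ Nat.card (zpowers (a * b)) := card_le_of_le htop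
      _ = orderOf (a * b) := Nat.card_zpowers _
      _ ≤ 2 := orderOf_le_of_pow_eq_one two_pos hsq

theorem two_lt_card_of_mem {H : Subgroup G} [Finite H] {a b : G} (ha : a ∈ H) (hb : b ∈ H)
    (ha1 : a ≠ 1) (hb1 : b ≠ 1) (hab : a ≠ b) : 2 < Nat.card H :=
  calc 2 < ({1, a, b} : Set G).ncard :=
        (Set.ncard_eq_three.mpr ⟨1, a, b, ha1.symm, hb1.symm, hab, rfl⟩).symm ▸ by norm_num
    _ ≤ (H : Set G).ncard :=
        Set.ncard_le_ncard (by simp [Set.insert_subset_iff, ha, hb, H.one_mem]) (Set.toFinite _)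
    _ = Nat.card H := Nat.card_coe_set_eq _

end Subgroup

theorem closure_of_two_support_four_not_simple {α : Type*} [Fintype α] [DecidableEq α]
    (σ₁ σ₂ : Equiv.Perm α) (h12 : σ₁ ≠ σ₂)
    (hs1 : σ₁.support.card = 4) (hs2 : σ₂.support.card = 4) :
    ¬ IsSimpleGroup (Subgroup.closure ({σ₁, σ₂} : Set (Equiv.Perm α))) := by
  intro hsimple
  set K := closure ({σ₁, σ₂} : Set (Perm α))
  have hσ₁K : σ₁ ∈ K := subset_closure (by simp)
  have hσ₂K : σ₂ ∈ K := subset_closure (by simp)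
  have hσ₁ : σ₁ ≠ 1 := by rintro rfl; simp at hs1
  have hσ₂ : σ₂ ≠ 1 := by rintro rfl; simp at hs2
  refine (two_lt_card_of_mem hσ₁K hσ₂K hσ₁ hσ₂ h12).not_ge ?_
  by_cases hK : K ≤ alternatingGroup α
  · exact card_closure_pair_le_two_of_sq_eq_one
      (Perm.sq_eq_one_of_card_support_eq_four_of_sign_eq_one hs1 (hK hσ₁K))
      (Perm.sq_eq_one_of_card_support_eq_four_of_sign_eq_one hs2 (hK hσ₂K)) h12
  · exact Perm.card_le_two_of_not_le_alternatingGroup hK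
end
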